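/- Uniqueness up to constants: Let φ ∈ L¹(Ω,ν) and let [u₁,v₁] and [u₂,v₂] be two solutions of (GP_φ). Then v₁ = v₂ ν-a.e. in Ω and u₁ − u₂ is ν-a.e. equal to a constant. -/

import Mathlib

/-!
Put `w = u₁ - u₂` and let `D(x, y)` be the difference of the two fluxes
`a(x, y, uᵢ(y) - uᵢ(x))`. Subtracting the equations and testing with `w` gives
`0 ≤ ∫_Ω (v₁ - v₂) w dν = ∬ D(x, y) w(x) dm_x(y) dν(x)`, the inequality coming from the
monotonicity of `γ` and `β`. Reversibility of `ν` and antisymmetry of `a` turn the right-hand side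
into `-½ ∬ D(x, y) (w(y) - w(x))`, whose integrand is nonnegative by strict monotonicity of `a`.
Hence the integrand vanishes, i.e. `w(y) = w(x)` for `ν ⊗ m_x`-a.e. `(x, y) ∈ Ω × Ω`;
`m`-connectedness forces such a `w` to be a.e. constant, and then `D = 0`, so `v₁ = v₂`.
-/

open MeasureTheory
open scoped ENNReal

/-- A monotone graph in ℝ × ℝ, viewed as a set-valued map. -/
def MonotoneGraph (θ : ℝ → Set ℝ) : Prop :=
  ∀ ⦃x y u v : ℝ⦄, u ∈ θ x → v ∈ θ y → 0 ≤ (u - v) * (x - y)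

/-- A maximal monotone graph in ℝ × ℝ. -/
def MaximalMonotoneGraph (θ : ℝ → Set ℝ) : Prop :=
  MonotoneGraph θ ∧
    ∀ θ' : ℝ → Set ℝ, MonotoneGraph θ' → (∀ x, θ x ⊆ θ' x) → ∀ x, θ' x = θ x

open Function ProbabilityTheory

theorem ae_snd_eq_fst_of_integral_mul_fst_nonneg {α : Type*} [MeasurableSpace α]
    {μ : Measure (α × α)} (hswap : MeasurePreserving Prod.swap μ μ) {D : α × α → ℝ}
    {w : α → ℝ} (hD : ∀ᵐ z ∂μ, D z.swap = -D z) (hint : Integrable (fun z => D z * w z.1) μ)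
    (hpos : ∀ᵐ z ∂μ, w z.2 = w z.1 ∨ 0 < D z * (w z.2 - w z.1))
    (hpair : 0 ≤ ∫ z, D z * w z.1 ∂μ) : ∀ᵐ z ∂μ, w z.2 = w z.1 := by
  have hsnd : (fun z => D z * w z.2) =ᵐ[μ] fun z => -(D z.swap * w z.swap.1) := by
    filter_upwards [hD] with z hz
    rw [hz, Prod.fst_swap, neg_mul, neg_neg]
  have hint_snd : Integrable (fun z => D z * w z.2) μ :=
    (hswap.integrable_comp_of_integrable hint).neg.congr hsnd.symm
  have hG_int : Integrable (fun z => D z * (w z.2 - w z.1)) μ := by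
    simp only [mul_sub]
    exact hint_snd.sub hint
  have hG_nonneg : 0 ≤ᵐ[μ] fun z => D z * (w z.2 - w z.1) := by
    filter_upwards [hpos] with z hz
    rcases hz with hz | hz
    · simp [hz]
    · exact hz.le
  have hswap_int : ∫ z, D z * w z.2 ∂μ = -∫ z, D z * w z.1 ∂μ := by
    rw [integral_congr_ae hsnd, integral_neg,
      hswap.integral_comp MeasurableEquiv.prodComm.measurableEmbedding (fun z => D z * w z.1)]
  have hG_integral : ∫ z, D z * (w z.2 - w z.1) ∂μ = -2 * ∫ z, D z * w z.1 ∂μ := by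
    simp only [mul_sub]
    rw [integral_sub hint_snd hint, hswap_int]
    ring
  have hG_zero : ∫ z, D z * (w z.2 - w z.1) ∂μ = 0 :=
    le_antisymm (by linarith) (integral_nonneg_of_ae hG_nonneg)
  filter_upwards [(integral_eq_zero_iff_of_nonneg_ae hG_nonneg hG_int).1 hG_zero, hpos]
    with z hzero hz
  exact hz.resolve_right (by simp [hzero])

section

variable {X : Type*}

def flux (a : X → X → ℝ → ℝ) (u : X → ℝ) (z : X × X) : ℝ := a z.1 z.2 (u z.2 - u z.1)

theorem flux_eq_of_sub_eq {a : X → X → ℝ → ℝ} {u₁ u₂ : X → ℝ} {z : X × X}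
    (h : (u₁ - u₂) z.2 = (u₁ - u₂) z.1) :
    flux a u₁ z = flux a u₂ z := by
  simp only [Pi.sub_apply] at h
  simp only [flux]
  congr 1
  linarith

variable [MeasurableSpace X] {m : X → Measure X} {ν : Measure X} {Ω : Set X}

def IsReversible (m : X → Measure X) (ν : Measure X) : Prop :=
  ∀ f : X → X → ℝ≥0∞, Measurable (uncurry f) →
    ∫⁻ x, ∫⁻ y, f x y ∂(m x) ∂ν = ∫⁻ x, ∫⁻ y, f y x ∂(m x) ∂ν

def IsMConnected (m : X → Measure X) (ν : Measure X) (Ω : Set X) : Prop :=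
  ∀ A B : Set X, MeasurableSet A → MeasurableSet B → A ⊆ Ω → B ⊆ Ω → ν A ≠ 0 → ν B ≠ 0 →
    A ∪ B = Ω → 0 < ∫⁻ x in A, m x B ∂ν

noncomputable def transitionKernel (hmeas : Measurable m) : Kernel X X := ⟨m, hmeas⟩

/-- `ν⌞Ω ⊗ m_x⌞Ω`: the double integrals `∫_Ω ∫_Ω … dm_x(y) dν(x)` are integrals against it. -/
noncomputable def pairMeasure (hmeas : Measurable m) (ν : Measure X) (hΩ : MeasurableSet Ω) :
    Measure (X × X) :=
  ν.restrict Ω ⊗ₘ (transitionKernel hmeas).restrict hΩ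

theorem IsReversible.ae_ae (hrev : IsReversible m ν) (hmeas : Measurable m) {P : X → Prop}
    (h : ∀ᵐ y ∂ν, P y) : ∀ᵐ x ∂ν, ∀ᵐ y ∂m x, P y := by
  set N := toMeasurable ν {y | ¬P y}
  have hN : MeasurableSet N := measurableSet_toMeasurable _ _
  have hνN : ∀ᵐ x ∂ν, x ∉ N := measure_eq_zero_iff_ae_notMem.1 (by rwa [measure_toMeasurable])
  have hmN : ∫⁻ x, m x N ∂ν = 0 := by
    have hswap := hrev (fun _ y => N.indicator 1 y)
      ((measurable_one.indicator hN).comp measurable_snd)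
    simp only [lintegral_indicator_one hN] at hswap
    rw [hswap, ← lintegral_zero]
    refine lintegral_congr_ae ?_
    filter_upwards [hνN] with x hx
    simp [hx]
  filter_upwards [(lintegral_eq_zero_iff ((Measure.measurable_coe hN).comp hmeas)).1 hmN]
    with x hx
  exact measure_mono_null (subset_toMeasurable _ _) hx

theorem IsReversible.ae_ae_restrict (hrev : IsReversible m ν) (hmeas : Measurable m)
    (hΩ : MeasurableSet Ω) {P : X → Prop} (h : ∀ᵐ y ∂ν.restrict Ω, P y) :
    ∀ᵐ x ∂ν.restrict Ω, ∀ᵐ y ∂(m x).restrict Ω, P y := by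
  rw [ae_restrict_iff' hΩ] at h
  exact ae_restrict_of_ae ((hrev.ae_ae hmeas h).mono fun x hx => (ae_restrict_iff' hΩ).2 hx)

section PairMeasure

variable {hmeas : Measurable m} {hΩ : MeasurableSet Ω}

theorem ae_pairMeasure_of_ae_ae {P : X × X → Prop} (hP : MeasurableSet {z | P z})
    (h : ∀ᵐ x ∂ν, ∀ᵐ y ∂m x, P (x, y)) : ∀ᵐ z ∂pairMeasure hmeas ν hΩ, P z :=
  Measure.ae_compProd_of_ae_ae hP <| (ae_restrict_of_ae h).mono fun _ hx => ae_restrict_of_ae hx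

variable [SFinite (ν.restrict Ω)] [IsSFiniteKernel (transitionKernel hmeas)]

theorem ae_ae_of_ae_pairMeasure {P : X × X → Prop} (h : ∀ᵐ z ∂pairMeasure hmeas ν hΩ, P z) :
    ∀ᵐ x ∂ν.restrict Ω, ∀ᵐ y ∂(m x).restrict Ω, P (x, y) :=
  Measure.ae_ae_of_ae_compProd (μ := ν.restrict Ω) (κ := (transitionKernel hmeas).restrict hΩ) h

theorem lintegral_pairMeasure {f : X × X → ℝ≥0∞} (hf : Measurable f) :
    ∫⁻ z, f z ∂pairMeasure hmeas ν hΩ = ∫⁻ x in Ω, ∫⁻ y in Ω, f (x, y) ∂m x ∂ν :=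
  Measure.lintegral_compProd hf

theorem integral_pairMeasure {f : X × X → ℝ} (hf : Integrable f (pairMeasure hmeas ν hΩ)) :
    ∫ z, f z ∂pairMeasure hmeas ν hΩ = ∫ x in Ω, ∫ y in Ω, f (x, y) ∂m x ∂ν :=
  Measure.integral_compProd hf

theorem pairMeasure_prod {A B : Set X} (hA : MeasurableSet A) (hB : MeasurableSet B)
    (hAΩ : A ⊆ Ω) (hBΩ : B ⊆ Ω) : pairMeasure hmeas ν hΩ (A ×ˢ B) = ∫⁻ x in A, m x B ∂ν := by
  rw [pairMeasure, Measure.compProd_apply_prod hA hB, Measure.restrict_restrict hA,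
    Set.inter_eq_left.2 hAΩ]
  simp only [Kernel.restrict_apply' _ _ _ hB, Set.inter_eq_left.2 hBΩ]
  rfl

theorem lintegral_comp_swap_pairMeasure (hrev : IsReversible m ν) {f : X × X → ℝ≥0∞}
    (hf : Measurable f) :
    ∫⁻ z, f z.swap ∂pairMeasure hmeas ν hΩ = ∫⁻ z, f z ∂pairMeasure hmeas ν hΩ := by
  have hiterated : ∀ g : X × X → ℝ≥0∞, Measurable g → ∫⁻ z, g z ∂pairMeasure hmeas ν hΩ =
      ∫⁻ x, ∫⁻ y, (Ω ×ˢ Ω).indicator g (x, y) ∂m x ∂ν := fun g hg => by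
    rw [lintegral_pairMeasure hg, ← lintegral_indicator hΩ]
    refine lintegral_congr fun x => ?_
    by_cases hx : x ∈ Ω
    · rw [Set.indicator_of_mem hx, ← lintegral_indicator hΩ]
      refine lintegral_congr fun y => ?_
      by_cases hy : y ∈ Ω <;> simp [hx, hy]
    · simp [hx]
  rw [hiterated (fun z => f z.swap) (hf.comp measurable_swap), hiterated f hf,
    hrev (fun x y => (Ω ×ˢ Ω).indicator f (x, y)) (hf.indicator (hΩ.prod hΩ))]
  congr! 4 with x y
  by_cases hx : x ∈ Ω <;> by_cases hy : y ∈ Ω <;> simp [hx, hy]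

theorem measurePreserving_swap_pairMeasure (hrev : IsReversible m ν) :
    MeasurePreserving Prod.swap (pairMeasure hmeas ν hΩ) (pairMeasure hmeas ν hΩ) := by
  refine ⟨measurable_swap, Measure.ext fun s hs => ?_⟩
  rw [Measure.map_apply measurable_swap hs, ← lintegral_indicator_one hs,
    ← lintegral_indicator_one (measurable_swap hs)]
  exact lintegral_comp_swap_pairMeasure hrev (measurable_one.indicator hs)

theorem memLp_pairMeasure_of_lintegral {f : X × X → ℝ} (hf : Measurable f) {q : ℝ} (hq : 0 < q)
    (h : ∫⁻ x in Ω, ∫⁻ y in Ω, ENNReal.ofReal (|f (x, y)| ^ q) ∂m x ∂ν < ⊤) :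
    MemLp f (ENNReal.ofReal q) (pairMeasure hmeas ν hΩ) := by
  refine ⟨hf.aestronglyMeasurable, (eLpNorm_lt_top_iff_lintegral_rpow_enorm_lt_top
    (ENNReal.ofReal_pos.2 hq).ne' ENNReal.ofReal_ne_top).2 ?_⟩
  rw [ENNReal.toReal_ofReal hq.le, lintegral_pairMeasure (hf.enorm.pow_const q)]
  simpa only [Real.enorm_eq_ofReal_abs, ENNReal.ofReal_rpow_of_nonneg (abs_nonneg _) hq.le]
    using h

end PairMeasure

section Markov

variable {hmeas : Measurable m} {hΩ : MeasurableSet Ω} [SFinite (ν.restrict Ω)]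
  [IsMarkovKernel (transitionKernel hmeas)]

theorem map_fst_pairMeasure_le :
    (pairMeasure hmeas ν hΩ).map Prod.fst ≤ ν.restrict Ω := by
  refine Measure.le_iff.2 fun s hs => ?_
  rw [Measure.map_apply measurable_fst hs, ← Set.prod_univ, pairMeasure,
    Measure.compProd_apply_prod hs .univ]
  calc ∫⁻ x in s, (transitionKernel hmeas).restrict hΩ x Set.univ ∂ν.restrict Ω
      ≤ ∫⁻ _ in s, 1 ∂ν.restrict Ω := lintegral_mono fun _ => by
        rw [Kernel.restrict_apply' _ _ _ .univ]; exact prob_le_one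
    _ = ν.restrict Ω s := by simp

theorem MeasureTheory.MemLp.comp_fst_pairMeasure {w : X → ℝ} {p : ℝ≥0∞}
    (hw : MemLp w p (ν.restrict Ω)) :
    MemLp (fun z => w z.1) p (pairMeasure hmeas ν hΩ) :=
  (hw.mono_measure map_fst_pairMeasure_le).comp_of_map measurable_fst.aemeasurable

end Markov

instance {hmeas : Measurable m} {hΩ : MeasurableSet Ω} [IsFiniteMeasure (ν.restrict Ω)]
    [IsFiniteKernel (transitionKernel hmeas)] : IsFiniteMeasure (pairMeasure hmeas ν hΩ) := by
  unfold pairMeasure; infer_instance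

section PairMeasure

variable {hmeas : Measurable m} {hΩ : MeasurableSet Ω} [SFinite (ν.restrict Ω)]
  [IsSFiniteKernel (transitionKernel hmeas)]

theorem ae_integrable_of_integrable_pairMeasure {F : X × X → ℝ}
    (hF : Integrable F (pairMeasure hmeas ν hΩ)) :
    ∀ᵐ x ∂ν.restrict Ω, Integrable (fun y => F (x, y)) ((m x).restrict Ω) :=
  ((Measure.integrable_compProd_iff hF.1).1 hF).1

theorem integral_sub_mul_fst_pairMeasure {F₁ F₂ : X × X → ℝ}
    (hF₁ : Integrable F₁ (pairMeasure hmeas ν hΩ)) (hF₂ : Integrable F₂ (pairMeasure hmeas ν hΩ))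
    {w v₁ v₂ φ : X → ℝ}
    (hint : Integrable (fun z => (F₁ z - F₂ z) * w z.1) (pairMeasure hmeas ν hΩ))
    (hsol₁ : ∀ᵐ x ∂ν.restrict Ω, v₁ x - ∫ y in Ω, F₁ (x, y) ∂m x = φ x)
    (hsol₂ : ∀ᵐ x ∂ν.restrict Ω, v₂ x - ∫ y in Ω, F₂ (x, y) ∂m x = φ x) :
    ∫ z, (F₁ z - F₂ z) * w z.1 ∂pairMeasure hmeas ν hΩ = ∫ x in Ω, (v₁ x - v₂ x) * w x ∂ν := by
  rw [integral_pairMeasure hint]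
  refine integral_congr_ae ?_
  filter_upwards [hsol₁, hsol₂, ae_integrable_of_integrable_pairMeasure hF₁,
    ae_integrable_of_integrable_pairMeasure hF₂] with x h₁ h₂ hi₁ hi₂
  rw [integral_mul_const, integral_sub hi₁ hi₂]
  congr 1
  linarith

theorem ae_eq_of_ae_eq_pairMeasure {F₁ F₂ : X × X → ℝ}
    (hF : F₁ =ᵐ[pairMeasure hmeas ν hΩ] F₂) {v₁ v₂ φ : X → ℝ}
    (hsol₁ : ∀ᵐ x ∂ν.restrict Ω, v₁ x - ∫ y in Ω, F₁ (x, y) ∂m x = φ x)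
    (hsol₂ : ∀ᵐ x ∂ν.restrict Ω, v₂ x - ∫ y in Ω, F₂ (x, y) ∂m x = φ x) :
    v₁ =ᵐ[ν.restrict Ω] v₂ := by
  filter_upwards [ae_ae_of_ae_pairMeasure hF, hsol₁, hsol₂] with x hx h₁ h₂
  rw [integral_congr_ae hx] at h₁
  linarith

theorem IsMConnected.exists_ae_eq_const (hconn : IsMConnected m ν Ω) {w : X → ℝ} (hw : Measurable w)
    (h : ∀ᵐ z ∂pairMeasure hmeas ν hΩ, w z.2 = w z.1) : ∃ c, ∀ᵐ x ∂ν.restrict Ω, w x = c := by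
  refine Filter.exists_eventuallyEq_const_of_forall_separating MeasurableSet fun U hU => ?_
  by_contra! hne
  have hnonnull : ∀ s, MeasurableSet s → ¬(∀ᵐ x ∂ν.restrict Ω, w x ∉ s) → ν (Ω ∩ w ⁻¹' s) ≠ 0 :=
    fun s hs h => by
      rwa [Set.inter_comm, ← Measure.restrict_apply (hw hs), Ne, measure_eq_zero_iff_ae_notMem]
  have hA := hnonnull U hU hne.2
  have hB := hnonnull Uᶜ hU.compl (by simpa using hne.1)
  have hcut := hconn _ _ (hΩ.inter (hw hU)) (hΩ.inter (hw hU.compl)) Set.inter_subset_left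
    Set.inter_subset_left hA hB (by rw [← Set.inter_union_distrib_left]; simp)
  rw [← pairMeasure_prod (hmeas := hmeas) (hΩ := hΩ)
    (hΩ.inter (hw hU)) (hΩ.inter (hw hU.compl))
    Set.inter_subset_left Set.inter_subset_left] at hcut
  refine hcut.ne' (measure_mono_null ?_ (ae_iff.1 h))
  rintro ⟨x, y⟩ ⟨⟨-, hx⟩, ⟨-, hy⟩⟩ hxy
  exact hy (hxy ▸ hx)

end PairMeasure

theorem ae_sub_mul_sub_nonneg_of_mem_graph {γ β : ℝ → Set ℝ} (hγ : MonotoneGraph γ)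
    (hβ : MonotoneGraph β) {Ω₁ Ω₂ : Set X} (hΩ : MeasurableSet (Ω₁ ∪ Ω₂)) {u₁ v₁ u₂ v₂ : X → ℝ}
    (hγ₁ : ∀ᵐ x ∂ν, x ∈ Ω₁ → v₁ x ∈ γ (u₁ x)) (hβ₁ : ∀ᵐ x ∂ν, x ∈ Ω₂ → v₁ x ∈ β (u₁ x))
    (hγ₂ : ∀ᵐ x ∂ν, x ∈ Ω₁ → v₂ x ∈ γ (u₂ x)) (hβ₂ : ∀ᵐ x ∂ν, x ∈ Ω₂ → v₂ x ∈ β (u₂ x)) :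
    ∀ᵐ x ∂ν.restrict (Ω₁ ∪ Ω₂), 0 ≤ (v₁ x - v₂ x) * (u₁ x - u₂ x) := by
  filter_upwards [ae_restrict_mem hΩ, ae_restrict_of_ae hγ₁, ae_restrict_of_ae hγ₂,
    ae_restrict_of_ae hβ₁, ae_restrict_of_ae hβ₂] with x hx g₁ g₂ b₁ b₂
  rcases hx with hx | hx
  · exact hγ (g₁ hx) (g₂ hx)
  · exact hβ (b₁ hx) (b₂ hx)

section Flux

variable {a : X → X → ℝ → ℝ} {u u₁ u₂ : X → ℝ}

theorem measurable_flux (hameas : Measurable fun z : X × X × ℝ => a z.1 z.2.1 z.2.2)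
    (hu : Measurable u) : Measurable (flux a u) :=
  hameas.comp (measurable_fst.prodMk (measurable_snd.prodMk
    ((hu.comp measurable_snd).sub (hu.comp measurable_fst))))

theorem IsReversible.ae_ae_flux_eq (hrev : IsReversible m ν) (hmeas : Measurable m)
    (hΩ : MeasurableSet Ω) {u' : X → ℝ} (hu : u =ᵐ[ν.restrict Ω] u') :
    ∀ᵐ x ∂ν.restrict Ω, ∀ᵐ y ∂(m x).restrict Ω, flux a u (x, y) = flux a u' (x, y) := by
  filter_upwards [hu, hrev.ae_ae_restrict hmeas hΩ hu] with x hx hxy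
  filter_upwards [hxy] with y hy
  simp [flux, hx, hy]

theorem IsReversible.solution_congr (hrev : IsReversible m ν) (hmeas : Measurable m)
    (hΩ : MeasurableSet Ω) {u' v φ : X → ℝ} (hu : u =ᵐ[ν.restrict Ω] u')
    (hsol : ∀ᵐ x ∂ν, x ∈ Ω → v x - ∫ y in Ω, a x y (u y - u x) ∂(m x) = φ x) :
    ∀ᵐ x ∂ν.restrict Ω, v x - ∫ y in Ω, flux a u' (x, y) ∂m x = φ x := by
  filter_upwards [(ae_restrict_iff' hΩ).2 hsol, hrev.ae_ae_flux_eq hmeas hΩ hu] with x hx hxy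
  rwa [← integral_congr_ae hxy]

variable {hmeas : Measurable m} {hΩ : MeasurableSet Ω}

theorem ae_flux_swap (hameas : Measurable fun z : X × X × ℝ => a z.1 z.2.1 z.2.2)
    (hu : Measurable u) (hasym : ∀ᵐ x ∂ν, ∀ᵐ y ∂(m x), ∀ r : ℝ, a x y r = -a y x (-r)) :
    ∀ᵐ z ∂pairMeasure hmeas ν hΩ, flux a u z.swap = -flux a u z := by
  refine ae_pairMeasure_of_ae_ae (measurableSet_eq_fun
    ((measurable_flux hameas hu).comp measurable_swap) (measurable_flux hameas hu).neg) ?_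
  filter_upwards [hasym] with x hx
  filter_upwards [hx] with y hy
  simp [flux, hy, neg_sub]

theorem ae_flux_sub_mul_pos (hameas : Measurable fun z : X × X × ℝ => a z.1 z.2.1 z.2.2)
    (hu₁ : Measurable u₁) (hu₂ : Measurable u₂)
    (hmono : ∀ᵐ x ∂ν, ∀ᵐ y ∂(m x), ∀ r s : ℝ, r ≠ s → 0 < (a x y r - a x y s) * (r - s)) :
    ∀ᵐ z ∂pairMeasure hmeas ν hΩ, (u₁ - u₂) z.2 = (u₁ - u₂) z.1 ∨
      0 < (flux a u₁ z - flux a u₂ z) * ((u₁ - u₂) z.2 - (u₁ - u₂) z.1) := by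
  have hw : Measurable (u₁ - u₂) := hu₁.sub hu₂
  refine ae_pairMeasure_of_ae_ae ((measurableSet_eq_fun (hw.comp measurable_snd)
    (hw.comp measurable_fst)).union (measurableSet_lt measurable_const
      (((measurable_flux hameas hu₁).sub (measurable_flux hameas hu₂)).mul
        ((hw.comp measurable_snd).sub (hw.comp measurable_fst))))) ?_
  filter_upwards [hmono] with x hx
  filter_upwards [hx] with y hy
  by_cases hxy : (u₁ - u₂) y = (u₁ - u₂) x
  · exact Or.inl hxy
  refine Or.inr ?_
  have hrs : u₁ y - u₁ x ≠ u₂ y - u₂ x := fun h => hxy (by simp only [Pi.sub_apply]; linarith)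
  convert hy _ _ hrs using 2
  · rfl
  · simp only [Pi.sub_apply]
    ring

theorem IsReversible.memLp_flux [SFinite (ν.restrict Ω)]
    [IsSFiniteKernel (transitionKernel hmeas)] (hrev : IsReversible m ν)
    (hameas : Measurable fun z : X × X × ℝ => a z.1 z.2.1 z.2.2) {u' : X → ℝ}
    (hu' : Measurable u') (hu : u =ᵐ[ν.restrict Ω] u') {q : ℝ} (hq : 0 < q)
    (hF : ∫⁻ x in Ω, ∫⁻ y in Ω, ENNReal.ofReal (|a x y (u y - u x)| ^ q) ∂(m x) ∂ν < ⊤) :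
    MemLp (flux a u') (ENNReal.ofReal q) (pairMeasure hmeas ν hΩ) := by
  refine memLp_pairMeasure_of_lintegral (measurable_flux hameas hu') hq (lt_of_eq_of_lt ?_ hF)
  refine lintegral_congr_ae ?_
  filter_upwards [hrev.ae_ae_flux_eq hmeas hΩ hu] with x hx
  refine lintegral_congr_ae ?_
  filter_upwards [hx] with y hy
  rw [← hy]
  rfl

end Flux

theorem ae_sub_snd_eq_fst_of_solutions {hmeas : Measurable m} {hΩ : MeasurableSet Ω}
    [IsMarkovKernel (transitionKernel hmeas)] [IsFiniteMeasure (ν.restrict Ω)]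
    (hrev : IsReversible m ν) {p q : ℝ} (hpq : p.HolderConjugate q) {a : X → X → ℝ → ℝ}
    (hameas : Measurable fun z : X × X × ℝ => a z.1 z.2.1 z.2.2)
    (hasym : ∀ᵐ x ∂ν, ∀ᵐ y ∂(m x), ∀ r : ℝ, a x y r = -a y x (-r))
    (hmono : ∀ᵐ x ∂ν, ∀ᵐ y ∂(m x), ∀ r s : ℝ, r ≠ s → 0 < (a x y r - a x y s) * (r - s))
    {u₁ u₂ v₁ v₂ φ : X → ℝ} (hu₁ : Measurable u₁) (hu₂ : Measurable u₂)
    (hw : MemLp (u₁ - u₂) (ENNReal.ofReal p) (ν.restrict Ω))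
    (hF₁ : MemLp (flux a u₁) (ENNReal.ofReal q) (pairMeasure hmeas ν hΩ))
    (hF₂ : MemLp (flux a u₂) (ENNReal.ofReal q) (pairMeasure hmeas ν hΩ))
    (hsol₁ : ∀ᵐ x ∂ν.restrict Ω, v₁ x - ∫ y in Ω, flux a u₁ (x, y) ∂m x = φ x)
    (hsol₂ : ∀ᵐ x ∂ν.restrict Ω, v₂ x - ∫ y in Ω, flux a u₂ (x, y) ∂m x = φ x)
    (hvu : ∀ᵐ x ∂ν.restrict Ω, 0 ≤ (v₁ x - v₂ x) * (u₁ - u₂) x) :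
    ∀ᵐ z ∂pairMeasure hmeas ν hΩ, (u₁ - u₂) z.2 = (u₁ - u₂) z.1 := by
  have := hpq.symm.ennrealOfReal
  have hq : 1 ≤ ENNReal.ofReal q := ENNReal.one_le_ofReal.2 hpq.symm.lt.le
  have hint : Integrable (fun z => (flux a u₁ z - flux a u₂ z) * (u₁ - u₂) z.1)
      (pairMeasure hmeas ν hΩ) := (hF₁.sub hF₂).integrable_mul hw.comp_fst_pairMeasure
  refine ae_snd_eq_fst_of_integral_mul_fst_nonneg (measurePreserving_swap_pairMeasure hrev)
    (D := fun z => flux a u₁ z - flux a u₂ z) ?_ hint (ae_flux_sub_mul_pos hameas hu₁ hu₂ hmono) ?_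
  · filter_upwards [ae_flux_swap hameas hu₁ hasym, ae_flux_swap hameas hu₂ hasym] with z h₁ h₂
    rw [h₁, h₂, neg_sub_neg, neg_sub]
  · rw [integral_sub_mul_fst_pairMeasure (hF₁.integrable hq) (hF₂.integrable hq) hint hsol₁ hsol₂]
    exact setIntegral_nonneg_of_ae_restrict hvu

end

theorem stmt14_general {X : Type*} [MeasurableSpace X] (m : X → Measure X)
    (hprob : ∀ x, IsProbabilityMeasure (m x)) (hmeas : Measurable m)
    (ν : Measure X)
    (hrev : ∀ f : X → X → ℝ≥0∞, Measurable (Function.uncurry f) →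
      ∫⁻ x, ∫⁻ y, f x y ∂(m x) ∂ν = ∫⁻ x, ∫⁻ y, f y x ∂(m x) ∂ν)
    (Ω₁ Ω₂ : Set X) (h1 : MeasurableSet Ω₁) (h2 : MeasurableSet Ω₂)
    (hfin : ν (Ω₁ ∪ Ω₂) < ⊤)
    (hconn : ∀ A B : Set X, MeasurableSet A → MeasurableSet B →
      A ⊆ Ω₁ ∪ Ω₂ → B ⊆ Ω₁ ∪ Ω₂ → ν A ≠ 0 → ν B ≠ 0 → A ∪ B = Ω₁ ∪ Ω₂ →
      0 < ∫⁻ x in A, m x B ∂ν)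
    (p p' : ℝ) (hp : 1 < p) (hp' : 1 / p + 1 / p' = 1)
    (a : X → X → ℝ → ℝ)
    (hameas : Measurable (fun z : X × X × ℝ => a z.1 z.2.1 z.2.2))
    (hasym : ∀ᵐ x ∂ν, ∀ᵐ y ∂(m x), ∀ r : ℝ, a x y r = - a y x (-r))
    (hmono : ∀ᵐ x ∂ν, ∀ᵐ y ∂(m x), ∀ r s : ℝ, r ≠ s → 0 < (a x y r - a x y s) * (r - s))
    (γ β : ℝ → Set ℝ) (hγ : MaximalMonotoneGraph γ) (hβ : MaximalMonotoneGraph β)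
    (φ : X → ℝ)
    (u₁ v₁ u₂ v₂ : X → ℝ)
    (hu₁ : MemLp u₁ (ENNReal.ofReal p) (ν.restrict (Ω₁ ∪ Ω₂)))
    (hu₂ : MemLp u₂ (ENNReal.ofReal p) (ν.restrict (Ω₁ ∪ Ω₂)))
    (hγ₁ : ∀ᵐ x ∂ν, x ∈ Ω₁ → v₁ x ∈ γ (u₁ x))
    (hβ₁ : ∀ᵐ x ∂ν, x ∈ Ω₂ → v₁ x ∈ β (u₁ x))
    (hγ₂ : ∀ᵐ x ∂ν, x ∈ Ω₁ → v₂ x ∈ γ (u₂ x))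
    (hβ₂ : ∀ᵐ x ∂ν, x ∈ Ω₂ → v₂ x ∈ β (u₂ x))
    (hF₁ : ∫⁻ x in Ω₁ ∪ Ω₂, ∫⁻ y in Ω₁ ∪ Ω₂,
        ENNReal.ofReal (|a x y (u₁ y - u₁ x)| ^ p') ∂(m x) ∂ν < ⊤)
    (hF₂ : ∫⁻ x in Ω₁ ∪ Ω₂, ∫⁻ y in Ω₁ ∪ Ω₂,
        ENNReal.ofReal (|a x y (u₂ y - u₂ x)| ^ p') ∂(m x) ∂ν < ⊤)
    (hsol₁ : ∀ᵐ x ∂ν, x ∈ Ω₁ ∪ Ω₂ →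
        v₁ x - ∫ y in Ω₁ ∪ Ω₂, a x y (u₁ y - u₁ x) ∂(m x) = φ x)
    (hsol₂ : ∀ᵐ x ∂ν, x ∈ Ω₁ ∪ Ω₂ →
        v₂ x - ∫ y in Ω₁ ∪ Ω₂, a x y (u₂ y - u₂ x) ∂(m x) = φ x) :
    (∀ᵐ x ∂ν, x ∈ Ω₁ ∪ Ω₂ → v₁ x = v₂ x) ∧
      ∃ c : ℝ, ∀ᵐ x ∂ν, x ∈ Ω₁ ∪ Ω₂ → u₁ x - u₂ x = c := by
  set Ω := Ω₁ ∪ Ω₂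
  have hΩ : MeasurableSet Ω := h1.union h2
  have : IsMarkovKernel (transitionKernel hmeas) := ⟨hprob⟩
  have : IsFiniteMeasure (ν.restrict Ω) := isFiniteMeasure_restrict.2 hfin.ne
  have hpq : p.HolderConjugate p' :=
    Real.holderConjugate_iff.2 ⟨hp, by simpa only [one_div] using hp'⟩
  -- Reversibility lets measurable representatives replace `uᵢ` inside the `m_x`-integrals.
  obtain ⟨u₁', hu₁'m, hu₁e⟩ := hu₁.1
  obtain ⟨u₂', hu₂'m, hu₂e⟩ := hu₂.1
  have hsol₁' := IsReversible.solution_congr hrev hmeas hΩ hu₁e hsol₁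
  have hsol₂' := IsReversible.solution_congr hrev hmeas hΩ hu₂e hsol₂
  have hvu : ∀ᵐ x ∂ν.restrict Ω, 0 ≤ (v₁ x - v₂ x) * (u₁' - u₂') x := by
    filter_upwards [ae_sub_mul_sub_nonneg_of_mem_graph hγ.1 hβ.1 hΩ hγ₁ hβ₁ hγ₂ hβ₂, hu₁e, hu₂e]
      with x hx e₁ e₂
    rwa [Pi.sub_apply, ← e₁, ← e₂]
  have hw : ∀ᵐ z ∂pairMeasure hmeas ν hΩ, (u₁' - u₂') z.2 = (u₁' - u₂') z.1 :=
    ae_sub_snd_eq_fst_of_solutions hrev hpq hameas hasym hmono hu₁'m.measurable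
    hu₂'m.measurable ((hu₁.ae_eq hu₁e).sub (hu₂.ae_eq hu₂e))
    (IsReversible.memLp_flux hrev hameas hu₁'m.measurable hu₁e hpq.symm.pos hF₁)
    (IsReversible.memLp_flux hrev hameas hu₂'m.measurable hu₂e hpq.symm.pos hF₂) hsol₁' hsol₂' hvu
  obtain ⟨c, hc⟩ :=
    IsMConnected.exists_ae_eq_const hconn (hu₁'m.measurable.sub hu₂'m.measurable) hw
  refine ⟨(ae_restrict_iff' hΩ).1 ?_, c, (ae_restrict_iff' hΩ).1 ?_⟩
  · exact ae_eq_of_ae_eq_pairMeasure (hw.mono fun z => flux_eq_of_sub_eq) hsol₁' hsol₂'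
  · filter_upwards [hc, hu₁e, hu₂e] with x hx e₁ e₂
    rwa [e₁, e₂]

/-- Uniqueness up to constants: if `[u₁,v₁]` and `[u₂,v₂]` are two solutions of `(GP_φ)`
on the `m`-connected set `Ω = Ω₁ ∪ Ω₂` (where for ν-a.e. `x ∈ Ω`, `m_x⌞Ω` and `ν⌞Ω` are
not mutually singular), then `v₁ = v₂` ν-a.e. in `Ω` and `u₁ - u₂` is ν-a.e. constant. -/
theorem stmt14 {X : Type*} [MeasurableSpace X] (m : X → Measure X)
    (hprob : ∀ x, IsProbabilityMeasure (m x)) (hmeas : Measurable m)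
    (ν : Measure X)
    (hrev : ∀ f : X → X → ℝ≥0∞, Measurable (Function.uncurry f) →
      ∫⁻ x, ∫⁻ y, f x y ∂(m x) ∂ν = ∫⁻ x, ∫⁻ y, f y x ∂(m x) ∂ν)
    (Ω₁ Ω₂ : Set X) (h1 : MeasurableSet Ω₁) (h2 : MeasurableSet Ω₂)
    (hdisj : Disjoint Ω₁ Ω₂) (hfin : ν (Ω₁ ∪ Ω₂) < ⊤)
    (hconn : ∀ A B : Set X, MeasurableSet A → MeasurableSet B →
      A ⊆ Ω₁ ∪ Ω₂ → B ⊆ Ω₁ ∪ Ω₂ → ν A ≠ 0 → ν B ≠ 0 → A ∪ B = Ω₁ ∪ Ω₂ →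
      0 < ∫⁻ x in A, m x B ∂ν)
    (hsing : ν {x : X | x ∈ Ω₁ ∪ Ω₂ ∧
      Measure.MutuallySingular ((m x).restrict (Ω₁ ∪ Ω₂)) (ν.restrict (Ω₁ ∪ Ω₂))} = 0)
    (p p' cp Cp : ℝ) (hp : 1 < p) (hp' : 1 / p + 1 / p' = 1)
    (hcp : 0 < cp) (hCp : 0 < Cp)
    (a : X → X → ℝ → ℝ)
    (hameas : Measurable (fun z : X × X × ℝ => a z.1 z.2.1 z.2.2))
    (hasym : ∀ᵐ x ∂ν, ∀ᵐ y ∂(m x), ∀ r : ℝ, a x y r = - a y x (-r))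
    (hmono : ∀ᵐ x ∂ν, ∀ᵐ y ∂(m x), ∀ r s : ℝ, r ≠ s → 0 < (a x y r - a x y s) * (r - s))
    (hgrowth : ∀ᵐ x ∂ν, ∀ᵐ y ∂(m x), ∀ r : ℝ, |a x y r| ≤ Cp * (1 + |r| ^ (p - 1)))
    (hcoer : ∀ᵐ x ∂ν, ∀ᵐ y ∂(m x), ∀ r : ℝ, cp * |r| ^ p ≤ a x y r * r)
    (γ β : ℝ → Set ℝ) (hγ : MaximalMonotoneGraph γ) (hβ : MaximalMonotoneGraph β)
    (hγ0 : (0 : ℝ) ∈ γ 0) (hβ0 : (0 : ℝ) ∈ β 0)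
    (φ : X → ℝ) (hφ : Integrable φ (ν.restrict (Ω₁ ∪ Ω₂)))
    (u₁ v₁ u₂ v₂ : X → ℝ)
    (hu₁ : MemLp u₁ (ENNReal.ofReal p) (ν.restrict (Ω₁ ∪ Ω₂)))
    (hv₁ : MemLp v₁ (ENNReal.ofReal p') (ν.restrict (Ω₁ ∪ Ω₂)))
    (hu₂ : MemLp u₂ (ENNReal.ofReal p) (ν.restrict (Ω₁ ∪ Ω₂)))
    (hv₂ : MemLp v₂ (ENNReal.ofReal p') (ν.restrict (Ω₁ ∪ Ω₂)))
    (hγ₁ : ∀ᵐ x ∂ν, x ∈ Ω₁ → v₁ x ∈ γ (u₁ x))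
    (hβ₁ : ∀ᵐ x ∂ν, x ∈ Ω₂ → v₁ x ∈ β (u₁ x))
    (hγ₂ : ∀ᵐ x ∂ν, x ∈ Ω₁ → v₂ x ∈ γ (u₂ x))
    (hβ₂ : ∀ᵐ x ∂ν, x ∈ Ω₂ → v₂ x ∈ β (u₂ x))
    (hF₁ : ∫⁻ x in Ω₁ ∪ Ω₂, ∫⁻ y in Ω₁ ∪ Ω₂,
        ENNReal.ofReal (|a x y (u₁ y - u₁ x)| ^ p') ∂(m x) ∂ν < ⊤)
    (hF₂ : ∫⁻ x in Ω₁ ∪ Ω₂, ∫⁻ y in Ω₁ ∪ Ω₂,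
        ENNReal.ofReal (|a x y (u₂ y - u₂ x)| ^ p') ∂(m x) ∂ν < ⊤)
    (hsol₁ : ∀ᵐ x ∂ν, x ∈ Ω₁ ∪ Ω₂ →
        v₁ x - ∫ y in Ω₁ ∪ Ω₂, a x y (u₁ y - u₁ x) ∂(m x) = φ x)
    (hsol₂ : ∀ᵐ x ∂ν, x ∈ Ω₁ ∪ Ω₂ →
        v₂ x - ∫ y in Ω₁ ∪ Ω₂, a x y (u₂ y - u₂ x) ∂(m x) = φ x) :
    (∀ᵐ x ∂ν, x ∈ Ω₁ ∪ Ω₂ → v₁ x = v₂ x) ∧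
      ∃ c : ℝ, ∀ᵐ x ∂ν, x ∈ Ω₁ ∪ Ω₂ → u₁ x - u₂ x = c :=
  stmt14_general m hprob hmeas ν hrev Ω₁ Ω₂ h1 h2 hfin hconn p p' hp hp' a hameas hasym hmono γ β hγ
    hβ φ u₁ v₁ u₂ v₂ hu₁ hu₂ hγ₁ hβ₁ hγ₂ hβ₂ hF₁ hF₂ hsol₁ hsol₂
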